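/- Let G and H be Polish groups, let ψ : G → H be a normal compression, and let K be a closed normal subgroup of G such that ψ(K) is dense in H. Then the topological closure of the commutator subgroup [G,G] is contained in K, and every closed subgroup of K that is normal in K is normal in G. -/

import Mathlib

/-!
`H` acts on `G` by `h • g = ψ⁻¹ (h ψ(g) h⁻¹)`. Each map `g ↦ h • g` is a Borel automorphism of
the Polish group `G`, hence continuous by Pettis' theorem, and each orbit map `h ↦ h • g` is Borel,
hence continuous on a comeagre set and then, by translating, everywhere. So a closed set that
contains the `K`-conjugates of `a` contains all its `H`-conjugates, since `ψ(K)` is dense in `H`.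
Apply this to the coset `K a` and to a closed `M ⊴ K`.
-/

open Filter Topology Set Pointwise

theorem BaireMeasurableSet.mul_inv_mem_nhds_one {X : Type*} [Group X] [TopologicalSpace X]
    [IsTopologicalGroup X] [BaireSpace X] {A : Set X} (hA : BaireMeasurableSet A)
    (hA' : ¬IsMeagre A) : A * A⁻¹ ∈ 𝓝 (1 : X) := by
  obtain ⟨U, hUo, hAU⟩ := hA.residualEq_isOpen
  rw [eventuallyEq_set] at hAU
  obtain ⟨x₀, hx₀⟩ : U.Nonempty :=
    nonempty_of_not_isMeagre fun hU => hA' (mp_mem hU (hAU.mono fun x hx hxU => mt hx.1 hxU))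
  refine mem_of_superset ((hUo.preimage (continuous_mul_const x₀)).mem_nhds (by simpa using hx₀))
    fun g hg => ?_
  -- `U ∩ gU` is a nonempty open set, so not meagre, and up to meagre sets it is `A ∩ gA`.
  have hV : ∃ᶠ y in residual X, y ∈ U ∧ g⁻¹ * y ∈ U :=
    (not_eventually.mp (not_isMeagre_of_isOpen
      (hUo.inter (hUo.preimage (continuous_const_mul g⁻¹)))
      ⟨g * x₀, hg, by simpa using hx₀⟩)).mono fun y hy => by simpa using hy
  have hAU' : ∀ᶠ y in residual X, g⁻¹ * y ∈ A ↔ g⁻¹ * y ∈ U :=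
    tendsto_residual_of_isOpenMap (continuous_const_mul g⁻¹) (isOpenMap_mul_left g⁻¹) hAU
  obtain ⟨y, ⟨hyU, hgyU⟩, hyA, hgyA⟩ := (hV.and_eventually (hAU.and hAU')).exists
  exact ⟨y, hyA.2 hyU, (g⁻¹ * y)⁻¹, by simpa using hgyA.2 hgyU, by group⟩

theorem MonoidHom.continuous_of_measurable {X Y : Type*} [Group X] [TopologicalSpace X]
    [IsTopologicalGroup X] [BaireSpace X] [MeasurableSpace X] [BorelSpace X]
    [Group Y] [TopologicalSpace Y] [IsTopologicalGroup Y] [TopologicalSpace.SeparableSpace Y]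
    [MeasurableSpace Y] [OpensMeasurableSpace Y]
    (f : X →* Y) (hf : Measurable f) : Continuous f := by
  refine continuous_of_continuousAt_one f ?_
  rw [ContinuousAt, map_one]
  intro W hW
  obtain ⟨V, hV, hVc, hVinv, hVW⟩ := exists_closed_nhds_one_inv_eq_mul_subset hW
  set d := TopologicalSpace.denseSeq Y
  set A : ℕ → Set X := fun n => {x | f x * d n ∈ V}
  have hcover : ⋃ n, A n = univ := by
    refine iUnion_eq_univ_iff.2 fun x => ?_
    obtain ⟨_, ⟨n, rfl⟩, hn⟩ := (TopologicalSpace.denseRange_denseSeq Y).inter_nhds_nonempty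
      ((continuous_const_mul (f x)).continuousAt.preimage_mem_nhds (x := (f x)⁻¹)
        (by simpa using hV))
    exact ⟨n, hn⟩
  obtain ⟨n, hn⟩ : ∃ n, ¬IsMeagre (A n) := by
    by_contra! h
    exact not_isMeagre_of_mem_residual univ_mem (hcover ▸ isMeagre_iUnion h)
  have hAn : MeasurableSet (A n) :=
    hf (hVc.preimage (continuous_mul_const (d n))).measurableSet
  refine mem_map.mpr <| mem_of_superset (hAn.baireMeasurableSet.mul_inv_mem_nhds_one hn) ?_
  rintro _ ⟨a, ha, b, hb, rfl⟩
  have hb' : f b⁻¹ * d n ∈ V := hb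
  have hfab : f (a * b) = (f a * d n) * (f b⁻¹ * d n)⁻¹ := by
    simp [mul_assoc]
  exact hVW (hfab ▸ mul_mem_mul ha (hVinv ▸ inv_mem_inv.mpr hb'))

theorem Measurable.exists_mem_residual_continuousOn {X Y : Type*} [TopologicalSpace X]
    [MeasurableSpace X] [BorelSpace X] [TopologicalSpace Y] [SecondCountableTopology Y]
    [MeasurableSpace Y] [OpensMeasurableSpace Y] {f : X → Y} (hf : Measurable f) :
    ∃ C ∈ residual X, ContinuousOn f C := by
  set B := TopologicalSpace.countableBasis Y
  have hB := TopologicalSpace.isBasis_countableBasis Y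
  have : Countable B := (TopologicalSpace.countable_countableBasis Y).to_subtype
  choose V hVo hfV using fun U : B =>
    (hf (hB.isOpen U.2).measurableSet).residualEq_isOpen
  refine ⟨{x | ∀ U : B, x ∈ f ⁻¹' U ↔ x ∈ V U}, eventually_countable_forall.mpr fun U =>
    eventuallyEq_set.mp (hfV U), ?_⟩
  rw [continuousOn_iff_continuous_domRestrict, hB.continuous_iff]
  intro U hU
  convert (hVo ⟨U, hU⟩).preimage continuous_subtype_val using 1
  ext ⟨x, hx⟩
  exact hx ⟨U, hU⟩

theorem continuous_smul_const_of_measurable {H X : Type*} [Group H] [TopologicalSpace H]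
    [IsTopologicalGroup H] [BaireSpace H] [FirstCountableTopology H] [MeasurableSpace H]
    [BorelSpace H] [TopologicalSpace X] [SecondCountableTopology X] [MeasurableSpace X]
    [OpensMeasurableSpace X] [MulAction H X] [ContinuousConstSMul H X] {x : X}
    (hx : Measurable fun h : H => h • x) : Continuous fun h : H => h • x := by
  obtain ⟨C, hC, hxC⟩ := hx.exists_mem_residual_continuousOn
  refine continuous_iff_seqContinuous.mpr fun {u h₀} hu => ?_
  have hshift : ∀ h : H, ∀ᶠ v in residual H, v * h ∈ C := fun h =>
    tendsto_residual_of_isOpenMap (continuous_mul_const h) (isOpenMap_mul_right h) hC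
  -- Translate the sequence into `C` by a single `v`, use continuity on `C`, then act by `v⁻¹`.
  obtain ⟨v, hv₀, hv⟩ := (dense_of_mem_residual
    ((hshift h₀).and (eventually_countable_forall.mpr fun n => hshift (u n)))).nonempty
  have hlim : Tendsto (fun n => (v * u n) • x) atTop (𝓝 ((v * h₀) • x)) :=
    (hxC _ hv₀).tendsto.comp (tendsto_nhdsWithin_iff.mpr ⟨hu.const_mul v, .of_forall hv⟩)
  simpa [Function.comp_def, mul_smul] using hlim.const_smul v⁻¹

namespace MonoidHom

variable {G H : Type*} [Group G] [Group H] {ψ : G →* H} [ψ.range.Normal]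

/-- Conjugation by `h : H`, transported to `G` along `ψ : G ≃* ψ.range`. -/
noncomputable def rangeConjAut (hψ : Function.Injective ψ) : H →* MulAut G :=
  (MulAut.congr (ofInjective hψ).symm).toMonoidHom.comp MulAut.conjNormal

theorem apply_rangeConjAut (hψ : Function.Injective ψ) (h : H) (g : G) :
    ψ (rangeConjAut hψ h g) = h * ψ g * h⁻¹ := by
  simp [rangeConjAut, MulAut.conjNormal_apply, ofInjective_apply]

theorem rangeConjAut_apply_self (hψ : Function.Injective ψ) (x g : G) :
    rangeConjAut hψ (ψ x) g = x * g * x⁻¹ :=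
  hψ (by simp [apply_rangeConjAut])

variable [TopologicalSpace G] [IsTopologicalGroup G] [PolishSpace G]
  [TopologicalSpace H] [IsTopologicalGroup H] [PolishSpace H]

theorem continuous_rangeConjAut (hψc : Continuous ψ) (hψ : Function.Injective ψ) (h : H) :
    Continuous (rangeConjAut hψ h) := by
  borelize G H
  refine MonoidHom.continuous_of_measurable (rangeConjAut hψ h : G ≃* G).toMonoidHom ?_
  refine (hψc.measurableEmbedding hψ).measurable_comp_iff.mp ?_
  change Measurable (ψ ∘ rangeConjAut hψ h)
  rw [show ψ ∘ rangeConjAut hψ h = fun g => h * ψ g * h⁻¹ from funext (apply_rangeConjAut hψ h)]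
  fun_prop

theorem continuous_rangeConjAut_apply (hψc : Continuous ψ) (hψ : Function.Injective ψ) (g : G) :
    Continuous fun h => rangeConjAut hψ h g := by
  borelize G H
  let : MulAction H G := MulAction.compHom G (rangeConjAut hψ)
  have : ContinuousConstSMul H G := ⟨continuous_rangeConjAut hψc hψ⟩
  refine continuous_smul_const_of_measurable (x := g) ?_
  refine (hψc.measurableEmbedding hψ).measurable_comp_iff.mp ?_
  rw [show ψ ∘ (fun h : H => h • g) = fun h => h * ψ g * h⁻¹ from
    funext fun h => apply_rangeConjAut hψ h g]
  fun_prop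

theorem conj_mem_of_dense_image (hψc : Continuous ψ) (hψ : Function.Injective ψ) {K : Set G}
    (hK : Dense (ψ '' K)) {S : Set G} (hS : IsClosed S) {a : G}
    (haS : ∀ k ∈ K, k * a * k⁻¹ ∈ S) (x : G) : x * a * x⁻¹ ∈ S := by
  have hclosed : IsClosed {h | rangeConjAut hψ h a ∈ S} :=
    hS.preimage (continuous_rangeConjAut_apply hψc hψ a)
  have himage : ψ '' K ⊆ {h | rangeConjAut hψ h a ∈ S} := by
    rintro _ ⟨k, hk, rfl⟩
    simpa [rangeConjAut_apply_self] using haS k hk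
  have := hclosed.closure_subset_iff.mpr himage (hK.closure_eq ▸ mem_univ (ψ x))
  rwa [mem_ofPred_eq, rangeConjAut_apply_self] at this

end MonoidHom

theorem stmt_4_general {G H : Type*}
    [Group G] [TopologicalSpace G] [IsTopologicalGroup G] [PolishSpace G]
    [Group H] [TopologicalSpace H] [IsTopologicalGroup H] [PolishSpace H]
    (ψ : G →* H) (hψc : Continuous ψ) (hψi : Function.Injective ψ)
    (hnorm : ψ.range.Normal)
    (K : Subgroup G) (hKc : IsClosed (K : Set G)) (hKn : K.Normal)
    (hKd : Dense (ψ '' (K : Set G))) :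
    (commutator G).topologicalClosure ≤ K ∧
      ∀ M : Subgroup G, M ≤ K → IsClosed (M : Set G) →
        (∀ k ∈ K, ∀ m ∈ M, k * m * k⁻¹ ∈ M) → M.Normal := by
  have hconj {S : Set G} (hS : IsClosed S) {a : G} :=
    ψ.conj_mem_of_dense_image hψc hψi hKd hS (a := a)
  refine ⟨Subgroup.topologicalClosure_minimal _ ?_ hKc, fun M _ hMc hM =>
    ⟨fun m hm x => hconj hMc (fun k hk => hM k hk m hm) x⟩⟩
  rw [commutator, Subgroup.commutator_le]
  intro x _ a _
  rw [commutatorElement_def]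
  change x * a * x⁻¹ ∈ (· * a⁻¹) ⁻¹' (K : Set G)
  refine hconj (hKc.preimage (continuous_mul_const a⁻¹)) (fun k hk => ?_) x
  have : k * a * k⁻¹ * a⁻¹ = k * (a * k⁻¹ * a⁻¹) := by group
  simpa [this] using K.mul_mem hk (hKn.conj_mem _ (K.inv_mem hk) a)

/-- Let `G` and `H` be Polish groups, let `ψ : G → H` be a normal compression,
and let `K` be a closed normal subgroup of `G` such that `ψ(K)` is dense in `H`. Then the
topological closure of the commutator subgroup `[G,G]` is contained in `K`, and every closed
subgroup of `K` that is normal in `K` is normal in `G`. -/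
theorem stmt_4 {G H : Type*}
    [Group G] [TopologicalSpace G] [IsTopologicalGroup G] [PolishSpace G]
    [Group H] [TopologicalSpace H] [IsTopologicalGroup H] [PolishSpace H]
    (ψ : G →* H) (hψc : Continuous ψ) (hψi : Function.Injective ψ)
    (hdense : DenseRange (⇑ψ)) (hnorm : ψ.range.Normal)
    (K : Subgroup G) (hKc : IsClosed (K : Set G)) (hKn : K.Normal)
    (hKd : Dense (ψ '' (K : Set G))) :
    (commutator G).topologicalClosure ≤ K ∧
      ∀ M : Subgroup G, M ≤ K → IsClosed (M : Set G) →
        (∀ k ∈ K, ∀ m ∈ M, k * m * k⁻¹ ∈ M) → M.Normal :=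
  stmt_4_general ψ hψc hψi hnorm K hKc hKn hKd
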